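/- Define the Minimum Bounding Box mechanism for two agents in the Euclidean plane: given reports x₁ = (a₁,b₁), x₂ = (a₂,b₂) ∈ ℝ² and a prediction F* = (a_F, b_F) ∈ ℝ² of the optimal facility location, output the point y whose first coordinate is a_F clamped to [min(a₁,a₂), max(a₁,a₂)] and whose second coordinate is b_F clamped to [min(b₁,b₂), max(b₁,b₂)]. Then (i) for all x₁, x₂, F*, the egalitarian social cost satisfies max(‖y−x₁‖, ‖y−x₂‖) ≤ ‖x₁−x₂‖ = 2·opt(x₁,x₂), and (ii) if F* = (x₁+x₂)/2 (the prediction is accurate), then y = F* and the cost equals opt(x₁,x₂). That is, the mechanism is 1-consistent and 2-robust for two-agent instances. -/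

import Mathlib

/-- A point of the Euclidean plane from its two coordinates. -/
noncomputable def pt (a b : ℝ) : EuclideanSpace ℝ (Fin 2) :=
  (WithLp.equiv 2 (Fin 2 → ℝ)).symm ![a, b]

/-- The Minimum Bounding Box mechanism for two agents in the Euclidean plane: given the
reports `x₁, x₂` and a prediction `F` of the optimal facility location, it outputs the
point whose each coordinate is the corresponding coordinate of `F` clamped to the
interval spanned by the corresponding coordinates of the two reports. -/
noncomputable def minBoundingBox (x₁ x₂ F : EuclideanSpace ℝ (Fin 2)) :
    EuclideanSpace ℝ (Fin 2) :=
  pt (max (min (x₁ 0) (x₂ 0)) (min (max (x₁ 0) (x₂ 0)) (F 0)))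
     (max (min (x₁ 1) (x₂ 1)) (min (max (x₁ 1) (x₂ 1)) (F 1)))

/-!
The output lies in the axis-parallel bounding box of `x₁` and `x₂`, and any two points of
that box are at most as far apart as its opposite corners `x₁` and `x₂`: this gives the
robustness bound. The midpoint already lies in the box, so clamping leaves an accurate
prediction unchanged, and the midpoint is at distance `‖x₁ - x₂‖ / 2` from both reports.
-/

open Set

section Clamp

variable {α : Type*} [LinearOrder α]

theorem max_min_min_max_mem_uIcc (a b t : α) : max (min a b) (min (max a b) t) ∈ uIcc a b :=
  ⟨le_max_left _ _, max_le min_le_max (min_le_left _ _)⟩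

theorem max_min_min_max_of_mem_uIcc {a b t : α} (h : t ∈ uIcc a b) :
    max (min a b) (min (max a b) t) = t := by
  rw [min_eq_right h.2, max_eq_right h.1]

end Clamp

namespace EuclideanSpace

variable {ι : Type*}

theorem dist_le_of_forall_mem_uIcc [Fintype ι] {x y x' y' : EuclideanSpace ℝ ι}
    (hx : ∀ i, x i ∈ uIcc (x' i) (y' i)) (hy : ∀ i, y i ∈ uIcc (x' i) (y' i)) :
    dist x y ≤ dist x' y' := by
  rw [EuclideanSpace.dist_eq, EuclideanSpace.dist_eq]
  gcongr with i
  exact Real.dist_le_of_mem_uIcc (hx i) (hy i)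

theorem midpoint_apply_mem_uIcc (x y : EuclideanSpace ℝ ι) (i : ι) :
    midpoint ℝ x y i ∈ uIcc (x i) (y i) := by
  have hi : midpoint ℝ x y i = midpoint ℝ (x i) (y i) := by
    simp [midpoint_eq_smul_add, mul_add]
  rw [hi, ← segment_eq_uIcc]
  exact midpoint_mem_segment _ _

end EuclideanSpace

section MinBoundingBox

variable (x₁ x₂ F : EuclideanSpace ℝ (Fin 2))

theorem minBoundingBox_apply (i : Fin 2) :
    minBoundingBox x₁ x₂ F i = max (min (x₁ i) (x₂ i)) (min (max (x₁ i) (x₂ i)) (F i)) := by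
  fin_cases i <;> rfl

theorem minBoundingBox_apply_mem_uIcc (i : Fin 2) :
    minBoundingBox x₁ x₂ F i ∈ uIcc (x₁ i) (x₂ i) := by
  rw [minBoundingBox_apply]
  exact max_min_min_max_mem_uIcc _ _ _

theorem dist_minBoundingBox_left_le : dist (minBoundingBox x₁ x₂ F) x₁ ≤ dist x₁ x₂ :=
  EuclideanSpace.dist_le_of_forall_mem_uIcc (minBoundingBox_apply_mem_uIcc x₁ x₂ F)
    fun _ => left_mem_uIcc

theorem dist_minBoundingBox_right_le : dist (minBoundingBox x₁ x₂ F) x₂ ≤ dist x₁ x₂ :=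
  EuclideanSpace.dist_le_of_forall_mem_uIcc (minBoundingBox_apply_mem_uIcc x₁ x₂ F)
    fun _ => right_mem_uIcc

theorem minBoundingBox_midpoint : minBoundingBox x₁ x₂ (midpoint ℝ x₁ x₂) = midpoint ℝ x₁ x₂ := by
  ext i
  rw [minBoundingBox_apply,
    max_min_min_max_of_mem_uIcc (EuclideanSpace.midpoint_apply_mem_uIcc x₁ x₂ i)]

end MinBoundingBox

/-- the Minimum Bounding Box mechanism is 1-consistent and 2-robust for
two-agent instances in the Euclidean plane: (i) its egalitarian social cost is always at
most `‖x₁-x₂‖ = 2·opt(x₁,x₂)`, and (ii) if the prediction is accurate (it equals the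
midpoint `(x₁+x₂)/2`), the output is the prediction itself and the cost equals
`opt(x₁,x₂) = ‖x₁-x₂‖/2`. -/
theorem stmt14 (x₁ x₂ F : EuclideanSpace ℝ (Fin 2)) :
    max (dist (minBoundingBox x₁ x₂ F) x₁) (dist (minBoundingBox x₁ x₂ F) x₂)
      ≤ dist x₁ x₂ ∧
    (F = midpoint ℝ x₁ x₂ →
      minBoundingBox x₁ x₂ F = F ∧
      max (dist (minBoundingBox x₁ x₂ F) x₁) (dist (minBoundingBox x₁ x₂ F) x₂)
        = dist x₁ x₂ / 2) := by
  refine ⟨max_le (dist_minBoundingBox_left_le x₁ x₂ F) (dist_minBoundingBox_right_le x₁ x₂ F),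
    ?_⟩
  rintro rfl
  refine ⟨minBoundingBox_midpoint x₁ x₂, ?_⟩
  rw [minBoundingBox_midpoint, dist_midpoint_left, dist_midpoint_right, max_self]
  norm_num [div_eq_inv_mul]
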